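/- Let k ≥ 2 be an integer, let a ∈ ℤ^{V(H_k)} be a nonzero vector with nonnegative entries, and let β ∈ ℝ be such that aᵀx ≤ β for every x ∈ STAB(H_k). Then β / (∑_{v ∈ V(H_k)} a_v) > 1/3; equivalently, 3β > ∑_{v ∈ V(H_k)} a_v. -/
import Mathlib


open Finset

noncomputable section

/-- `cone(P)`: the homogenization of `P`, indexed by `Option V` with `none` playing
the role of the `0` coordinate. -/
def lsCone {V : Type*} (P : Set (V → ℝ)) : Set (Option V → ℝ) :=
  {y | ∃ (lam : ℝ) (x : V → ℝ), 0 ≤ lam ∧ x ∈ P ∧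
    y = fun o => o.elim lam (fun v => lam * x v)}

/-- The lift `LŜ₊(P)`: symmetric PSD matrices `Y` indexed by `Option V`
with `Y e₀ = diag Y` and all columns conditions. -/
def lsLift {V : Type*} [Fintype V] [DecidableEq V] (P : Set (V → ℝ)) :
    Set (Matrix (Option V) (Option V) ℝ) :=
  {Y | Y.PosSemidef ∧ Y.mulVec (Pi.single none 1) = Matrix.diag Y ∧
      ∀ v : V, Y.mulVec (Pi.single (some v) 1) ∈ lsCone P ∧
        Y.mulVec (Pi.single none 1 - Pi.single (some v) 1) ∈ lsCone P}

/-- The Lovász–Schrijver operator `LS₊`. -/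
def lsPlus {V : Type*} [Fintype V] [DecidableEq V] (P : Set (V → ℝ)) : Set (V → ℝ) :=
  {x | ∃ Y ∈ lsLift P, Y.mulVec (Pi.single none 1) = fun o => o.elim 1 x}

/-- The fractional stable set polytope. -/
def FRAC {V : Type*} (G : SimpleGraph V) : Set (V → ℝ) :=
  {x | (∀ v, 0 ≤ x v ∧ x v ≤ 1) ∧ ∀ u v, G.Adj u v → x u + x v ≤ 1}

/-- The stable set polytope: convex hull of incidence vectors of stable sets. -/
def STAB {V : Type*} (G : SimpleGraph V) : Set (V → ℝ) :=
  convexHull ℝ {x | ∃ S : Set V, (∀ u ∈ S, ∀ v ∈ S, ¬ G.Adj u v) ∧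
    x = S.indicator fun _ => (1 : ℝ)}

/-- The graph `H_k`, on vertex set `Fin k × Fin 3` (vertex `i_p` is `(i, p)`). -/
def Hgraph (k : ℕ) : SimpleGraph (Fin k × Fin 3) :=
  SimpleGraph.fromRel (fun a b =>
    (a.1 = b.1 ∧ ((a.2 = 0 ∧ b.2 = 1) ∨ (a.2 = 1 ∧ b.2 = 2))) ∨
    (a.1 ≠ b.1 ∧ a.2 = 0 ∧ b.2 = 2))

/-- The vector `w_k(a,b)`: entry `a` on `[k]₀ ∪ [k]₂` and `b` on `[k]₁`. -/
def wVec (k : ℕ) (a b : ℝ) : Fin k × Fin 3 → ℝ := fun v => if v.2 = 1 then b else a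

set_option maxHeartbeats 1000000

theorem Hk_valid_third (k : ℕ) (hk : 2 ≤ k) (a : Fin k × Fin 3 → ℤ) (ha : a ≠ 0)
    (hpos : ∀ v, 0 ≤ a v) (β : ℝ)
    (hvalid : ∀ x ∈ STAB (Hgraph k), ∑ v : Fin k × Fin 3, (a v : ℝ) * x v ≤ β) :
    (∑ v : Fin k × Fin 3, (a v : ℝ)) < 3 * β := by
  have hk3 : (0:ℝ) < 3*(k:ℝ) - 4 := by
    have : (2:ℝ) ≤ (k:ℝ) := by exact_mod_cast hk
    linarith
  obtain ⟨δ, hδdef⟩ : ∃ δ : ℝ, δ = (3*(k:ℝ)-4)⁻¹ := ⟨_, rfl⟩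
  have hδpos : 0 < δ := hδdef ▸ inv_pos.2 hk3
  have hδ1 : (3*(k:ℝ)-4) * δ = 1 := hδdef ▸ mul_inv_cancel₀ (ne_of_gt hk3)
  obtain ⟨c, hcdef⟩ : ∃ c : ℝ, c = ((k:ℝ)-1)*δ := ⟨_, rfl⟩
  -- stable sets
  set Z : Set (Fin k × Fin 3) := {v | v.2 = 0} with hZ
  set T : Set (Fin k × Fin 3) := {v | v.2 = 2} with hT
  set S : Fin k → Set (Fin k × Fin 3) :=
    fun i => {v | (v.1 = i ∧ v.2 ≠ 1) ∨ (v.1 ≠ i ∧ v.2 = 1)} with hS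
  -- weights and points
  set w : Fin k ⊕ Fin 2 → ℝ := fun j => Sum.elim (fun _ => δ) (fun _ => ((k:ℝ)-2)*δ) j with hw
  set z : Fin k ⊕ Fin 2 → (Fin k × Fin 3 → ℝ) := fun j =>
    Sum.elim (fun i => (S i).indicator (fun _ => (1:ℝ)))
      (fun j2 => if j2 = 0 then Z.indicator (fun _ => (1:ℝ)) else T.indicator (fun _ => (1:ℝ))) j
    with hz
  have hwnn : ∀ j ∈ (Finset.univ : Finset (Fin k ⊕ Fin 2)), 0 ≤ w j := by
    rintro (i | j) _
    · exact le_of_lt hδpos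
    · have : (2:ℝ) ≤ (k:ℝ) := by exact_mod_cast hk
      have : (0:ℝ) ≤ (k:ℝ)-2 := by linarith
      exact mul_nonneg this (le_of_lt hδpos)
  have hwsum : ∑ j : Fin k ⊕ Fin 2, w j = 1 := by
    rw [Fintype.sum_sum_type]
    simp only [hw, Sum.elim_inl, Sum.elim_inr, Finset.sum_const, Finset.card_univ,
      Fintype.card_fin, nsmul_eq_mul]
    push_cast
    linear_combination hδ1
  have hzmem : ∀ j ∈ (Finset.univ : Finset (Fin k ⊕ Fin 2)), z j ∈
      {x : Fin k × Fin 3 → ℝ | ∃ S : Set (Fin k × Fin 3),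
        (∀ u ∈ S, ∀ v ∈ S, ¬ (Hgraph k).Adj u v) ∧ x = S.indicator fun _ => (1 : ℝ)} := by
    rintro (i | j) _
    · refine ⟨S i, ?_, rfl⟩
      intro u hu v hv hadj
      rw [Hgraph, SimpleGraph.fromRel_adj] at hadj
      simp only [hS, Set.mem_setOf_eq] at hu hv
      obtain ⟨hne, h | h⟩ := hadj <;>
        rcases h with (⟨h1, (⟨h2, h3⟩ | ⟨h2, h3⟩)⟩ | ⟨h1, h2, h3⟩) <;>
        · rcases hu with ⟨hu1, hu2⟩ | ⟨hu1, hu2⟩ <;> rcases hv with ⟨hv1, hv2⟩ | ⟨hv1, hv2⟩ <;>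
            simp_all
    · by_cases hj : j = 0
      · refine ⟨Z, ?_, by simp [hz, hj]⟩
        intro u hu v hv hadj
        rw [Hgraph, SimpleGraph.fromRel_adj] at hadj
        simp only [hZ, Set.mem_setOf_eq] at hu hv
        obtain ⟨hne, h | h⟩ := hadj <;>
          rcases h with (⟨h1, (⟨h2, h3⟩ | ⟨h2, h3⟩)⟩ | ⟨h1, h2, h3⟩) <;> simp_all
      · refine ⟨T, ?_, by simp [hz, hj]⟩
        intro u hu v hv hadj
        rw [Hgraph, SimpleGraph.fromRel_adj] at hadj
        simp only [hT, Set.mem_setOf_eq] at hu hv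
        obtain ⟨hne, h | h⟩ := hadj <;>
          rcases h with (⟨h1, (⟨h2, h3⟩ | ⟨h2, h3⟩)⟩ | ⟨h1, h2, h3⟩) <;> simp_all
  have hx : (fun _ : Fin k × Fin 3 => c) ∈ STAB (Hgraph k) := by
    have hmem := Finset.centerMass_mem_convexHull (Finset.univ : Finset (Fin k ⊕ Fin 2))
      hwnn (by rw [hwsum]; norm_num) hzmem
    rw [Finset.centerMass_eq_of_sum_1 _ _ hwsum] at hmem
    have heq : (∑ j : Fin k ⊕ Fin 2, w j • z j) = (fun _ : Fin k × Fin 3 => c) := by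
      funext v
      obtain ⟨i, p⟩ := v
      rw [Finset.sum_apply]
      rw [Fintype.sum_sum_type]
      have hfin0 : (w (Sum.inr 0) • z (Sum.inr 0)) (i, p)
          = ((k:ℝ)-2)*δ * (if p = 0 then 1 else 0) := by
        simp [hw, hz, Set.indicator_apply, hZ, Set.mem_setOf_eq]
      have hfin1 : (w (Sum.inr 1) • z (Sum.inr 1)) (i, p)
          = ((k:ℝ)-2)*δ * (if p = 2 then 1 else 0) := by
        simp [hw, hz, Set.indicator_apply, hT, Set.mem_setOf_eq]
      have hinl : ∀ i' : Fin k, (w (Sum.inl i') • z (Sum.inl i')) (i, p)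
          = δ * (if (i = i' ∧ p ≠ 1) ∨ (i ≠ i' ∧ p = 1) then 1 else 0) := by
        intro i'
        simp only [hw, hz, Sum.elim_inl, Pi.smul_apply, smul_eq_mul,
          Set.indicator_apply, hS, Set.mem_setOf_eq]
      rw [Finset.sum_congr rfl (fun i' _ => hinl i'), Fin.sum_univ_two, hfin0, hfin1]
      have hsum_eq : ∑ i' : Fin k, δ * (if i = i' then (1:ℝ) else 0) = δ := by
        simp only [mul_ite, mul_one, mul_zero, Finset.sum_ite_eq, Finset.mem_univ, if_true]
      have hsum_ne : ∑ i' : Fin k, δ * (if i = i' then (0:ℝ) else 1) = ((k:ℝ)-1) * δ := by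
        have h1 : ∀ i' : Fin k, δ * (if i = i' then (0:ℝ) else 1)
            = δ - δ * (if i = i' then (1:ℝ) else 0) := by
          intro i'; by_cases h : i = i' <;> simp [h]
        rw [Finset.sum_congr rfl (fun i' _ => h1 i'), Finset.sum_sub_distrib, hsum_eq]
        simp only [Finset.sum_const, Finset.card_univ, Fintype.card_fin, nsmul_eq_mul]
        ring
      by_cases hp : p = 1
      · have h2 : ∀ i' : Fin k, (if (i = i' ∧ p ≠ 1) ∨ (i ≠ i' ∧ p = 1) then (1:ℝ) else 0)
            = (if i = i' then (0:ℝ) else 1) := by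
          intro i'; by_cases h : i = i' <;> simp [h, hp]
        simp only [h2]
        rw [hsum_ne]
        have h0 : (if p = 0 then (1:ℝ) else 0) = 0 := by simp [hp]
        have h22 : (if p = 2 then (1:ℝ) else 0) = 0 := by simp [hp]
        rw [h0, h22, hcdef]
        ring
      · have h2 : ∀ i' : Fin k, (if (i = i' ∧ p ≠ 1) ∨ (i ≠ i' ∧ p = 1) then (1:ℝ) else 0)
            = (if i = i' then (1:ℝ) else 0) := by
          intro i'; by_cases h : i = i' <;> simp [h, hp]
        simp only [h2]
        rw [hsum_eq]
        have hp02 : p = 0 ∨ p = 2 := by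
          have h3 := p.2
          rcases p with ⟨pv, hpv⟩
          simp only [Fin.ext_iff] at hp ⊢
          omega
        have hone : (if p = 0 then (1:ℝ) else 0) + (if p = 2 then (1:ℝ) else 0) = 1 := by
          rcases hp02 with h | h <;> simp [h]
        have hfact : ((k:ℝ)-2)*δ * (if p = 0 then (1:ℝ) else 0)
            + ((k:ℝ)-2)*δ * (if p = 2 then (1:ℝ) else 0) = ((k:ℝ)-2)*δ := by
          rcases hp02 with h | h <;> rw [h] <;> simp
        rw [hcdef]
        linarith [hfact]
    rw [heq] at hmem
    exact hmem
  have hb := hvalid _ hx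
  have h1 : c * ∑ v : Fin k × Fin 3, (a v : ℝ) ≤ β := by
    rw [Finset.mul_sum]
    calc ∑ v : Fin k × Fin 3, c * (a v : ℝ) = ∑ v : Fin k × Fin 3, (a v : ℝ) * c := by
          apply Finset.sum_congr rfl; intros; ring
      _ ≤ β := hb
  have hsumpos : (0:ℝ) < ∑ v : Fin k × Fin 3, (a v : ℝ) := by
    obtain ⟨v0, hv0⟩ : ∃ v, a v ≠ 0 := by
      by_contra h
      push_neg at h
      exact ha (funext h)
    have h1le : (1:ℝ) ≤ (a v0 : ℝ) := by
      have : 1 ≤ a v0 := lt_of_le_of_ne (hpos v0) (Ne.symm hv0)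
      exact_mod_cast this
    have : (a v0 : ℝ) ≤ ∑ v : Fin k × Fin 3, (a v : ℝ) := by
      apply Finset.single_le_sum (fun v _ => ?_) (Finset.mem_univ v0)
      exact_mod_cast hpos v
    linarith
  have h3c : 3*c = 1 + δ := by
    rw [hcdef]
    nlinarith [hδ1]
  nlinarith [mul_pos hδpos hsumpos]
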